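/- The TRS consisting of the single rule f(a,x) → f(x,x) is weakly bounded duplicating but not bounded duplicating: {⊤ → ⊥} / R is terminating, but {◇(x) → x} / R is not terminating. -/

import Mathlib

/-- First-order terms over signature `F` and variables `V`. -/
inductive Tm (F V : Type) : Type
  | var : V → Tm F V
  | app : F → List (Tm F V) → Tm F V

namespace Tm

variable {F V G : Type}

/-- Applying a substitution to a term. -/
def subst (σ : V → Tm F V) : Tm F V → Tm F V
  | var x => σ x
  | app f ts => app f (ts.attach.map (fun ⟨t, _⟩ => subst σ t))
  decreasing_by · simp only [Tm.app.sizeOf_spec]; have := List.sizeOf_lt_of_mem ‹_›; omega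

/-- List of (occurrences of) variables of a term. -/
def vars : Tm F V → List V
  | var x => [x]
  | app _ ts => ts.attach.flatMap (fun ⟨t, _⟩ => vars t)
  decreasing_by · simp only [Tm.app.sizeOf_spec]; have := List.sizeOf_lt_of_mem ‹_›; omega

/-- Renaming the function symbols of a term. -/
def mapF (g : F → G) : Tm F V → Tm G V
  | var x => var x
  | app f ts => app (g f) (ts.attach.map (fun ⟨t, _⟩ => mapF g t))
  decreasing_by · simp only [Tm.app.sizeOf_spec]; have := List.sizeOf_lt_of_mem ‹_›; omega

/-- The subterm at a position (a list of argument indices), if the position exists. -/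
def sub : List Nat → Tm F V → Option (Tm F V)
  | [], t => some t
  | _ :: _, var _ => none
  | i :: p, app _ ts => (ts[i]?).bind (sub p)

/-- Replacing the subterm at a position by another term. -/
def repl : List Nat → Tm F V → Tm F V → Tm F V
  | [], _, u => u
  | _ :: _, var x, _ => var x
  | i :: p, app f ts, u =>
      app f (match ts[i]? with
             | some t => ts.set i (repl p t u)
             | none => ts)

end Tm

/-- A rewrite rule: a pair of terms. -/
structure Rule (F V : Type) where
  lhs : Tm F V
  rhs : Tm F V

/-- The usual variable conditions on a rewrite rule: the left-hand side is
not a variable and all variables of the right-hand side occur in the left-hand side. -/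
def WfRule {F V : Type} (ρ : Rule F V) : Prop :=
  (∀ x, ρ.lhs ≠ .var x) ∧ ∀ x, x ∈ ρ.rhs.vars → x ∈ ρ.lhs.vars

/-- `s` rewrites to `t` at position `p` using rule `ρ`. -/
def StepAt {F V : Type} (p : List Nat) (ρ : Rule F V) (s t : Tm F V) : Prop :=
  ∃ σ : V → Tm F V, Tm.sub p s = some (Tm.subst σ ρ.lhs) ∧ t = Tm.repl p s (Tm.subst σ ρ.rhs)

/-- The rewrite relation of a TRS (set of rules). -/
def Step {F V : Type} (R : Set (Rule F V)) (s t : Tm F V) : Prop :=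
  ∃ ρ ∈ R, ∃ p, StepAt p ρ s t

/-- `l` matches `t`: some substitution instance of `l` equals `t`. -/
def Matches {F V : Type} (l t : Tm F V) : Prop :=
  ∃ σ : V → Tm F V, Tm.subst σ l = t

/-- Reflexive-transitive closure of rewriting. -/
abbrev Steps {F V : Type} (R : Set (Rule F V)) : Tm F V → Tm F V → Prop :=
  Relation.ReflTransGen (Step R)

/-- Confluence on a set of terms. -/
def ConfluentOn {F V : Type} (R : Set (Rule F V)) (T : Set (Tm F V)) : Prop :=
  ∀ s ∈ T, ∀ t u, Steps R s t → Steps R s u → ∃ v, Steps R t v ∧ Steps R u v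

/-- Confluence (on all terms). -/
def Confluent {F V : Type} (R : Set (Rule F V)) : Prop :=
  ConfluentOn R Set.univ

/-- A relation is terminating if it admits no infinite sequences, i.e., its
inverse is well-founded. -/
def TerminatingRel {α : Type} (r : α → α → Prop) : Prop :=
  WellFounded (fun a b => r b a)

/-- One step of `A` relative to `B`: `→B* · →A · →B*`. -/
def RelStep {F V : Type} (A B : Set (Rule F V)) (s t : Tm F V) : Prop :=
  ∃ s' t', Steps B s s' ∧ Step A s' t' ∧ Steps B t' t

/-- Relative termination of `A/B`. -/
def RelTerminating {F V : Type} (A B : Set (Rule F V)) : Prop :=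
  TerminatingRel (RelStep A B)

/-- Signature with a binary `f`, constants `a`, `⊤`, `⊥`, and a unary `◇`. -/
inductive Sym10 : Type
  | f | a | top | bot | d

/-- The rule `f(a,x) → f(x,x)`. -/
def faRule : Rule Sym10 Nat :=
  ⟨Tm.app Sym10.f [Tm.app Sym10.a [], Tm.var 0], Tm.app Sym10.f [Tm.var 0, Tm.var 0]⟩

/-- The rule `⊤ → ⊥`. -/
def tbRule : Rule Sym10 Nat := ⟨Tm.app Sym10.top [], Tm.app Sym10.bot []⟩

/-- The rule `◇(x) → x`. -/
def dRule10 : Rule Sym10 Nat := ⟨Tm.app Sym10.d [Tm.var 0], Tm.var 0⟩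

/-!
Interpret terms in `ℕ` so that exactly the constant `a` has value `0`:
`f(x, y) ↦ x + y + 1`, plus `y` once more when `x = 0`; `⊤ ↦ 2`; every other symbol adds `1` to
the sum of its arguments. No rewrite step turns a subterm into `a` or out of it, and among values
that are zero together the interpretation is monotone in each argument. Hence the value never
increases under `f(a,x) → f(x,x)` (it is even preserved) and strictly decreases under `⊤ → ⊥`.
-/

theorem List.sum_set_add {M : Type*} [AddCommMonoid M] :
    ∀ (l : List M) (i : ℕ) (x x' : M), l[i]? = some x → (l.set i x').sum + x = l.sum + x'
  | [], _, _, _, h => by simp at h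
  | y :: l, 0, x, x', h => by
    obtain rfl : y = x := by simpa using h
    simp only [List.set_cons_zero, List.sum_cons]
    abel
  | y :: l, i + 1, x, x', h => by
    simp only [List.set_cons_succ, List.sum_cons, add_assoc]
    rw [List.sum_set_add l i x x' (by simpa using h)]

namespace Tm

variable {F V α : Type}

@[simp]
theorem subst_var (σ : V → Tm F V) (x : V) : subst σ (var x) = σ x := by
  rw [subst]

@[simp]
theorem subst_app (σ : V → Tm F V) (f : F) (ts : List (Tm F V)) :
    subst σ (app f ts) = app f (ts.map (subst σ)) := by
  rw [subst]
  simp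

def eval (I : F → List α → α) (v : V → α) : Tm F V → α
  | var x => v x
  | app f ts => I f (ts.attach.map (fun ⟨t, _⟩ => eval I v t))
  decreasing_by · simp only [Tm.app.sizeOf_spec]; have := List.sizeOf_lt_of_mem ‹_›; omega

@[simp]
theorem eval_var (I : F → List α → α) (v : V → α) (x : V) : eval I v (var x) = v x := by
  rw [eval]

@[simp]
theorem eval_app (I : F → List α → α) (v : V → α) (f : F) (ts : List (Tm F V)) :
    eval I v (app f ts) = I f (ts.map (eval I v)) := by
  rw [eval]
  simp

theorem rel_repl {r : Tm F V → Tm F V → Prop}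
    (harg : ∀ f ts i t t', ts[i]? = some t → r t' t → r (app f (ts.set i t')) (app f ts)) :
    ∀ (p : List ℕ) (s u u' : Tm F V), sub p s = some u → r u' u → r (repl p s u') s
  | [], s, u, u', h, hr => by
    obtain rfl : s = u := by simpa [sub] using h
    simpa [repl] using hr
  | _ :: _, var _, _, _, h, _ => by simp [sub] at h
  | i :: p, app f ts, u, u', h, hr => by
    obtain ⟨t, ht, hsub⟩ := Option.bind_eq_some_iff.mp h
    rw [repl, ht]
    exact harg f ts i t _ ht (rel_repl harg p t u u' hsub hr)

theorem rel_of_step {R : Set (Rule F V)} {r : Tm F V → Tm F V → Prop}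
    (harg : ∀ f ts i t t', ts[i]? = some t → r t' t → r (app f (ts.set i t')) (app f ts))
    (hrule : ∀ ρ ∈ R, ∀ σ, r (subst σ ρ.rhs) (subst σ ρ.lhs)) {s t : Tm F V}
    (h : Step R s t) : r t s := by
  obtain ⟨ρ, hρ, p, σ, hsub, rfl⟩ := h
  exact rel_repl harg p s _ _ hsub (hrule ρ hρ σ)

end Tm

open Tm

def MonotoneInArgs {F α : Type} (I : F → List α → α) (r : α → α → Prop) : Prop :=
  ∀ f xs i x x', xs[i]? = some x → r x' x → r (I f (xs.set i x')) (I f xs)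

theorem eval_rel_of_step {F V α : Type} {R : Set (Rule F V)} {I : F → List α → α}
    {v : V → α} {r : α → α → Prop} (hI : MonotoneInArgs I r)
    (hrule : ∀ ρ ∈ R, ∀ σ, r (eval I v (subst σ ρ.rhs)) (eval I v (subst σ ρ.lhs)))
    {s t : Tm F V} (h : Step R s t) : r (eval I v t) (eval I v s) := by
  refine rel_of_step (r := fun t s => r (eval I v t) (eval I v s)) ?_ hrule h
  intro f ts i t t' ht htt'
  simpa [List.map_set] using hI f (ts.map (eval I v)) i _ _ (by simp [ht]) htt'

theorem relTerminating_of_measure {F V : Type} {A B : Set (Rule F V)} (μ : Tm F V → ℕ)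
    (hB : ∀ {s t}, Step B s t → μ t ≤ μ s) (hA : ∀ {s t}, Step A s t → μ t < μ s) :
    RelTerminating A B := by
  have hBs : ∀ {s t}, Steps B s t → μ t ≤ μ s := fun h => by
    induction h with
    | refl => exact le_rfl
    | tail _ hst ih => exact (hB hst).trans ih
  refine Subrelation.wf ?_ (InvImage.wf μ wellFounded_lt)
  rintro t s ⟨s', t', hss', hs't', ht't⟩
  exact (hBs ht't).trans_lt ((hA hs't').trans_le (hBs hss'))

theorem not_relTerminating_of_relStep_self {F V : Type} {A B : Set (Rule F V)} {t : Tm F V}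
    (h : RelStep A B t t) : ¬ RelTerminating A B :=
  fun hA => hA.irrefl.irrefl t h

namespace Sym10

def weight : Sym10 → List ℕ → ℕ
  | a, [] => 0
  | f, [x, y] => x + y + (if x = 0 then y else 0) + 1
  | top, xs => xs.sum + 2
  | _, xs => xs.sum + 1

theorem weight_ne_zero (g : Sym10) {xs : List ℕ} (hxs : xs ≠ []) : weight g xs ≠ 0 := by
  unfold weight
  split <;> simp_all

theorem weight_set_add_sub_le (g : Sym10) {xs : List ℕ} {i x x' : ℕ} (hx : xs[i]? = some x)
    (hz : x' = 0 ↔ x = 0) (hle : x' ≤ x) : weight g (xs.set i x') + (x - x') ≤ weight g xs := by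
  have hsum := List.sum_set_add xs i x x' hx
  cases g <;> rcases xs with _ | ⟨u, _ | ⟨w, _ | ⟨z, zs⟩⟩⟩ <;> rcases i with _ | _ | i <;>
    simp_all [weight] <;> (try split_ifs) <;> omega

theorem monotoneInArgs_weight_le :
    MonotoneInArgs weight fun x' x => x' ≤ x ∧ (x' = 0 ↔ x = 0) := by
  rintro g xs i x x' hx ⟨hle, hz⟩
  have hxs : xs ≠ [] := by rintro rfl; simp at hx
  refine ⟨le_trans le_self_add (weight_set_add_sub_le g hx hz hle), ?_⟩
  simp [weight_ne_zero g hxs, weight_ne_zero g (xs := xs.set i x') (by simpa using hxs)]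

theorem monotoneInArgs_weight_lt :
    MonotoneInArgs weight fun x' x => x' < x ∧ (x' = 0 ↔ x = 0) := by
  rintro g xs i x x' hx ⟨hlt, hz⟩
  obtain ⟨-, hz'⟩ := monotoneInArgs_weight_le g xs i x x' hx ⟨hlt.le, hz⟩
  have := weight_set_add_sub_le g hx hz hlt.le
  exact ⟨by omega, hz'⟩

end Sym10

open Sym10

theorem eval_weight_subst_faRule (v : ℕ → ℕ) (σ : ℕ → Tm Sym10 ℕ) :
    eval weight v (subst σ faRule.rhs) = eval weight v (subst σ faRule.lhs) := by
  simp only [faRule, subst_app, subst_var, eval_app, List.map_cons, List.map_nil, weight]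
  split_ifs <;> omega

theorem relStep_cycle :
    RelStep {dRule10} {faRule} (app f [app a [], app d [app a []]])
      (app f [app a [], app d [app a []]]) := by
  refine ⟨app f [app d [app a []], app d [app a []]], _,
    .single ⟨faRule, rfl, [], fun _ => app d [app a []], ?_, ?_⟩,
    ⟨dRule10, rfl, [0], fun _ => app a [], ?_, ?_⟩, .refl⟩ <;>
    simp [faRule, dRule10, sub, repl]

/-- `{f(a,x) → f(x,x)}` is weakly bounded duplicating but not
bounded duplicating. -/
theorem fa_weakly_bounded_not_bounded :
    RelTerminating ({tbRule} : Set (Rule Sym10 Nat)) ({faRule} : Set (Rule Sym10 Nat)) ∧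
    ¬ RelTerminating ({dRule10} : Set (Rule Sym10 Nat)) ({faRule} : Set (Rule Sym10 Nat)) := by
  refine ⟨relTerminating_of_measure (eval weight fun _ => 1) (fun h => ?_) (fun h => ?_),
    not_relTerminating_of_relStep_self relStep_cycle⟩
  · refine (eval_rel_of_step monotoneInArgs_weight_le ?_ h).1
    rintro _ rfl σ
    simp [eval_weight_subst_faRule]
  · refine (eval_rel_of_step monotoneInArgs_weight_lt ?_ h).1
    rintro _ rfl σ
    simp [tbRule, weight]
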